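/- Consider six qubit registers A, B, C, D, E, F in the state |Ψ_init⟩ = |Ψ⁺⟩_{AB} ⊗ |Ψ⁺⟩_{CD} ⊗ |Ψ⁺⟩_{EF}. Then for each pair of measurement outcomes (a₁, a₂) ∈ {0,1}², applying CNOT^{(B,C)}, projecting C onto |a₁⟩, applying σ_X^{a₁} to D, then applying CNOT^{(B,E)}, projecting E onto |a₂⟩, and applying σ_X^{a₂} to F, yields the vector (1/2)·(1/√2)(|0000⟩_{ABDF} + |1111⟩_{ABDF}). In particular, the Connection:Fanout operation Fanout^B_{C→D, E→F} on three EPR pairs produces a four-qubit GHZ state on registers A, B, D, F, simulating the classical fanout (copy) operation of network coding. -/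
import Mathlib


open scoped TensorProduct

namespace QNC

noncomputable section

/-- The state space of `n` qubit registers: amplitudes on the computational basis. -/
abbrev QState (n : ℕ) : Type := (Fin n → Bool) → ℂ

/-- Computational basis state `|x⟩`. -/
def ket {n : ℕ} (x : Fin n → Bool) : QState n := fun y => if y = x then 1 else 0

/-- The CNOT gate with control register `c` and target register `t`. -/
def CNOTgate {n : ℕ} (c t : Fin n) : QState n →ₗ[ℂ] QState n where
  toFun ψ := fun x => ψ (Function.update x t (xor (x c) (x t)))
  map_add' _ _ := rfl
  map_smul' _ _ := rfl

/-- The Pauli `σ_X` gate on register `i`. -/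
def Xgate {n : ℕ} (i : Fin n) : QState n →ₗ[ℂ] QState n where
  toFun ψ := fun x => ψ (Function.update x i (!(x i)))
  map_add' _ _ := rfl
  map_smul' _ _ := rfl

/-- The Pauli `σ_Z` gate on register `i`. -/
def Zgate {n : ℕ} (i : Fin n) : QState n →ₗ[ℂ] QState n where
  toFun ψ := fun x => if x i then -ψ x else ψ x
  map_add' ψ φ := by funext x; by_cases h : x i <;> simp [h, neg_add] <;> ring
  map_smul' c ψ := by funext x; by_cases h : x i <;> simp [h]

/-- The Hadamard gate on register `i`. -/
def Hgate {n : ℕ} (i : Fin n) : QState n →ₗ[ℂ] QState n where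
  toFun ψ := fun x => (Real.sqrt 2 : ℂ)⁻¹ *
      (ψ (Function.update x i false) + (if x i then -1 else 1) * ψ (Function.update x i true))
  map_add' ψ φ := by funext x; simp only [Pi.add_apply]; ring
  map_smul' c ψ := by
    funext x; simp only [Pi.smul_apply, smul_eq_mul, RingHom.id_apply]; ring

/-- The computational-basis measurement map `|a⟩⟨a|_i ⊗ I` for outcome `a` on register `i`
(the measured register is kept, left in the basis state `|a⟩`, and can be disregarded). -/
def proj {n : ℕ} (i : Fin n) (a : Bool) : QState n →ₗ[ℂ] QState n where
  toFun ψ := fun x => if x i = a then ψ x else 0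
  map_add' ψ φ := by funext x; by_cases h : x i = a <;> simp [h]
  map_smul' c ψ := by funext x; by_cases h : x i = a <;> simp [h]

/-- `σ_X^a` on register `i`. -/
def Xpow {n : ℕ} (a : Bool) (i : Fin n) : QState n →ₗ[ℂ] QState n :=
  if a then Xgate i else LinearMap.id

/-- `σ_Z^a` on register `i`. -/
def Zpow {n : ℕ} (a : Bool) (i : Fin n) : QState n →ₗ[ℂ] QState n :=
  if a then Zgate i else LinearMap.id

/-- The Connection operation `Con^c_{r→t}` with measurement outcome `a`:
apply `CNOT^{(c,r)}`, project register `r` onto `|a⟩`, apply `σ_X^a` to register `t`. -/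
def Con {n : ℕ} (c r t : Fin n) (a : Bool) : QState n →ₗ[ℂ] QState n :=
  Xpow a t ∘ₗ proj r a ∘ₗ CNOTgate c r

/-- The Connection:Add operation `Add^{c₁,c₂}_{r→t}` with measurement outcome `a`:
apply `CNOT^{(c₁,r)}`, then `CNOT^{(c₂,r)}`, project `r` onto `|a⟩`, apply `σ_X^a` to `t`. -/
def AddOp {n : ℕ} (c₁ c₂ r t : Fin n) (a : Bool) : QState n →ₗ[ℂ] QState n :=
  Con c₂ r t a ∘ₗ CNOTgate c₁ r

/-- The Connection:Fanout operation `Fanout^c_{r₁→t₁, r₂→t₂}` with outcomes `a₁, a₂`. -/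
def Fanout {n : ℕ} (c r₁ t₁ r₂ t₂ : Fin n) (a₁ a₂ : Bool) : QState n →ₗ[ℂ] QState n :=
  Con c r₂ t₂ a₂ ∘ₗ Con c r₁ t₁ a₁

/-- The Removal operation `Rem_{r→t}` with measurement outcome `a`:
apply `H` to `r`, project `r` onto `|a⟩`, apply `σ_Z^a` to `t`. -/
def Rem {n : ℕ} (r t : Fin n) (a : Bool) : QState n →ₗ[ℂ] QState n :=
  Zpow a t ∘ₗ proj r a ∘ₗ Hgate r

/-- The Removal:Add operation `RemAdd_{r→t₁,t₂}` with measurement outcome `a`: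
apply `H` to `r`, project `r` onto `|a⟩`, apply `σ_Z^a` to both `t₁` and `t₂`. -/
def RemAdd {n : ℕ} (r t₁ t₂ : Fin n) (a : Bool) : QState n →ₗ[ℂ] QState n :=
  Zpow a t₂ ∘ₗ Zpow a t₁ ∘ₗ proj r a ∘ₗ Hgate r



lemma Xgate_ket {n : ℕ} (i : Fin n) (x : Fin n → Bool) :
    Xgate i (ket x) = ket (Function.update x i (!(x i))) := by
  have hf : Function.Involutive (fun y : Fin n → Bool => Function.update y i (!(y i))) := by
    intro z; funext j
    by_cases hj : j = i
    · subst hj; simp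
    · simp [Function.update_of_ne hj]
  funext y
  simp only [Xgate, LinearMap.coe_mk, AddHom.coe_mk, ket, hf.eq_iff]

lemma proj_ket {n : ℕ} (i : Fin n) (a : Bool) (x : Fin n → Bool) :
    proj i a (ket x) = if x i = a then ket x else 0 := by
  funext y
  simp only [proj, LinearMap.coe_mk, AddHom.coe_mk, ket]
  by_cases hy : y = x
  · subst hy; by_cases h : y i = a <;> simp [proj, ket, h]
  · by_cases h : x i = a <;> simp [proj, ket, hy, h]

lemma CNOT_ket {n : ℕ} (c t : Fin n) (h : c ≠ t) (x : Fin n → Bool) :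
    CNOTgate c t (ket x) = ket (Function.update x t (xor (x c) (x t))) := by
  have hf : Function.Involutive (fun y : Fin n → Bool => Function.update y t (xor (y c) (y t))) := by
    intro z; funext j
    by_cases hj : j = t
    · subst hj
      simp [Function.update_of_ne h, Bool.xor_assoc]
    · simp [Function.update_of_ne hj]
  funext y
  simp only [CNOTgate, LinearMap.coe_mk, AddHom.coe_mk, ket, hf.eq_iff]

lemma upd2 (x0 x1 x2 x3 x4 x5 v : Bool) :
    Function.update ![x0, x1, x2, x3, x4, x5] (2 : Fin 6) v = ![x0, x1, v, x3, x4, x5] := by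
  funext i; fin_cases i <;> simp [Function.update] <;> rfl

lemma upd3 (x0 x1 x2 x3 x4 x5 v : Bool) :
    Function.update ![x0, x1, x2, x3, x4, x5] (3 : Fin 6) v = ![x0, x1, x2, v, x4, x5] := by
  funext i; fin_cases i <;> simp [Function.update] <;> rfl

lemma upd4 (x0 x1 x2 x3 x4 x5 v : Bool) :
    Function.update ![x0, x1, x2, x3, x4, x5] (4 : Fin 6) v = ![x0, x1, x2, x3, v, x5] := by
  funext i; fin_cases i <;> simp [Function.update] <;> rfl

lemma upd5 (x0 x1 x2 x3 x4 x5 v : Bool) :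
    Function.update ![x0, x1, x2, x3, x4, x5] (5 : Fin 6) v = ![x0, x1, x2, x3, x4, v] := by
  funext i; fin_cases i <;> simp [Function.update] <;> rfl

lemma fanout_ket (a₁ a₂ b d f : Bool) :
    Fanout (1 : Fin 6) 2 3 4 5 a₁ a₂ (ket ![b, b, d, d, f, f])
      = if d = xor b a₁ then (if f = xor b a₂ then ket ![b, b, a₁, b, a₂, b] else 0) else 0 := by
  rcases a₁ <;> rcases a₂ <;> rcases b <;> rcases d <;> rcases f <;>
    simp [Fanout, Con, Xpow, CNOT_ket (1 : Fin 6) 2 (by decide), CNOT_ket (1 : Fin 6) 4 (by decide), proj_ket, Xgate_ket,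
      upd2, upd3, upd4, upd5] <;> rfl

/-- **Connection:Fanout on three EPR pairs simulates the classical fanout (copy).**
Registers `A, B, C, D, E, F` are `0,…,5`. Applying `Fanout^B_{C→D, E→F}` with outcomes
`a₁, a₂` to `|Ψ⁺⟩_{AB} ⊗ |Ψ⁺⟩_{CD} ⊗ |Ψ⁺⟩_{EF}` yields
`(1/2)(1/√2)(|0000⟩_{ABDF} + |1111⟩_{ABDF})`, a four-qubit GHZ state on `A, B, D, F`
(with the measured registers `C, E` left in `|a₁⟩, |a₂⟩`, to be disregarded). -/
theorem fanout_butterfly (a₁ a₂ : Bool) :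
    Fanout (1 : Fin 6) 2 3 4 5 a₁ a₂
      (((Real.sqrt 2 : ℂ)⁻¹) ^ 3 •
        ∑ b : Bool, ∑ d : Bool, ∑ f : Bool, ket ![b, b, d, d, f, f])
    = ((Real.sqrt 2 : ℂ)⁻¹) ^ 3 •
        (ket ![false, false, a₁, false, a₂, false]
          + ket ![true, true, a₁, true, a₂, true]) := by
  rcases a₁ <;> rcases a₂ <;>
    simp only [map_smul, map_sum, Fintype.sum_bool, map_add, fanout_ket,
      Bool.xor_false, Bool.xor_true, Bool.not_true, Bool.not_false, reduceIte,
      reduceCtorEq, if_true, if_false, add_zero, zero_add] <;>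
    congr 1 <;> abel

end

end QNC
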